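/- arXiv:1310.1583 — 2 statements merged into one kernel-verified Lean document; each statement's English description precedes it below -/
import Mathlib

section
/- Let n be even, let T_{n,d} be the graph on vertices {0,...,n−1} with edges between i and j whenever min{|i−j|, n−|i−j|} ∈ {1,3,...,2d+1}, and let f be uniformly distributed on Hom(T_{n,d},0). Then Pr(|Rng(f)| < 3) ≤ 2^{1−n/2}. -/
/-!
Every homomorphism satisfies `f x ≡ x (mod 2)`, since `0, 1, …, n − 1` is a path in `T_{n,d}`.
If the range has fewer than three values, it is `{0, f 1}`, so parity forces
`f = 0` on the even vertices and `f = f 1 = ±1` on the odd ones: at most two homomorphisms.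
Conversely, for `n = 2m` every edge joins vertices of opposite parity, so each of the `2^m` ways
of putting `±1` on the odd vertices and `0` on the even ones is a homomorphism.
-/

/-- `f : {0,…,n−1} → ℤ` is a graph homomorphism from the torus graph `T_{n,d}` to `ℤ`
sending `0` to `0`: `f 0 = 0` and `|f x − f y| = 1` whenever
`min{|x−y|, n−|x−y|} ∈ {1,3,…,2d+1}`. -/
def THom (n d : ℕ) (f : Fin n → ℤ) : Prop :=
  (∀ x : Fin n, (x : ℕ) = 0 → f x = 0) ∧
  ∀ x y : Fin n,
    (Odd (min (((x : ℕ) : ℤ) - ((y : ℕ) : ℤ)).natAbs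
        (n - (((x : ℕ) : ℤ) - ((y : ℕ) : ℤ)).natAbs)) ∧
     min (((x : ℕ) : ℤ) - ((y : ℕ) : ℤ)).natAbs
        (n - (((x : ℕ) : ℤ) - ((y : ℕ) : ℤ)).natAbs) ≤ 2 * d + 1) →
    |f x - f y| = 1

lemma mod_two_ne_of_odd_cyclicDist {n a b : ℕ} (hn : Even n)
    (h : Odd (min ((a : ℤ) - b).natAbs (n - ((a : ℤ) - b).natAbs))) : a % 2 ≠ b % 2 := by
  obtain ⟨r, hr⟩ := hn
  obtain ⟨k, hk⟩ := h
  rcases le_total ((a : ℤ) - b).natAbs (n - ((a : ℤ) - b).natAbs) with hle | hle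
  · rw [min_eq_left hle] at hk; omega
  · rw [min_eq_right hle] at hk; omega

def alternating (n : ℕ) (c : ℤ) : Fin n → ℤ := fun x => if Even (x : ℕ) then 0 else c

def oddSigns (m : ℕ) (g : Fin m → Bool) : Fin (m + m) → ℤ := fun x =>
  if Even (x : ℕ) then 0 else if g ⟨(x : ℕ) / 2, by omega⟩ then 1 else -1

namespace THom

variable {n d : ℕ} {f : Fin n → ℤ}

lemma abs_sub_succ (hf : THom n d f) (k : ℕ) (hk : k + 1 < n) :
    |f ⟨k + 1, hk⟩ - f ⟨k, by omega⟩| = 1 := by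
  apply hf.2
  have hdist : (((k + 1 : ℕ) : ℤ) - (k : ℤ)).natAbs = 1 := by omega
  simp only [hdist]
  rw [min_eq_left (by omega)]
  exact ⟨odd_one, by omega⟩

lemma even_sub_val (hf : THom n d f) (x : Fin n) : Even (f x - (x : ℕ)) := by
  obtain ⟨k, hk⟩ := x
  induction k with
  | zero => simp [hf.1 ⟨0, hk⟩ rfl]
  | succ k ih =>
    have hstep := hf.abs_sub_succ k hk
    have hprev := ih (by omega)
    simp only [Int.even_iff] at hprev ⊢
    push_cast
    rcases abs_eq (zero_le_one' ℤ) |>.1 hstep with h | h <;> omega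

lemma eq_alternating (hf : THom n d f) (h1 : 1 < n) (hrange : (Set.range f).ncard < 3) :
    f = alternating n (f ⟨1, h1⟩) := by
  have hf0 : f ⟨0, by omega⟩ = 0 := hf.1 _ rfl
  have hf1 : f ⟨1, h1⟩ = 1 ∨ f ⟨1, h1⟩ = -1 := by
    have := hf.abs_sub_succ 0 h1
    rwa [hf0, sub_zero, abs_eq zero_le_one] at this
  have hvalues : ∀ x, f x = 0 ∨ f x = f ⟨1, h1⟩ := by
    intro x
    by_contra! hx
    have hthree : ({0, f ⟨1, h1⟩, f x} : Set ℤ).ncard = 3 :=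
      Set.ncard_eq_three.2 ⟨_, _, _, by omega, hx.1.symm, hx.2.symm, rfl⟩
    have hsub : ({0, f ⟨1, h1⟩, f x} : Set ℤ) ⊆ Set.range f := by
      rintro z (rfl | rfl | rfl)
      exacts [⟨_, hf0⟩, ⟨_, rfl⟩, ⟨_, rfl⟩]
    have := Set.ncard_le_ncard hsub (Set.finite_range f)
    omega
  funext x
  have hpar := hf.even_sub_val x
  rw [Int.even_iff] at hpar
  unfold alternating
  split_ifs with hx <;> rw [Nat.even_iff] at hx <;> rcases hvalues x with h | h <;> omega

end THom

lemma THom.of_even_eq_zero {n : ℕ} (d : ℕ) {f : Fin n → ℤ} (hn : Even n)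
    (heven : ∀ x : Fin n, Even (x : ℕ) → f x = 0)
    (hodd : ∀ x : Fin n, ¬Even (x : ℕ) → |f x| = 1) : THom n d f := by
  refine ⟨fun x hx => heven x (by simp [hx]), fun x y ⟨hxy, _⟩ => ?_⟩
  have hne := mod_two_ne_of_odd_cyclicDist hn hxy
  by_cases hx : Even (x : ℕ)
  · have hy : ¬Even (y : ℕ) := by rw [Nat.even_iff] at hx ⊢; omega
    rw [heven x hx, zero_sub, abs_neg, hodd y hy]
  · have hy : Even (y : ℕ) := by rw [Nat.even_iff] at hx ⊢; omega
    rw [heven y hy, sub_zero, hodd x hx]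

lemma oddSigns_injective (m : ℕ) : Function.Injective (oddSigns m) := by
  intro g g' h
  funext i
  have hi := congrFun h ⟨2 * i + 1, by omega⟩
  have hodd : ¬Even (2 * (i : ℕ) + 1) := by simp [parity_simps]
  have hhalf : (⟨(2 * (i : ℕ) + 1) / 2, by omega⟩ : Fin m) = i := Fin.ext (by simp; omega)
  simp only [oddSigns, if_neg hodd, hhalf] at hi
  cases hg : g i <;> cases hg' : g' i <;> simp_all

lemma thom_oddSigns (m d : ℕ) (g : Fin m → Bool) : THom (m + m) d (oddSigns m g) :=
  THom.of_even_eq_zero d ⟨m, rfl⟩ (fun x hx => if_pos hx)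
    (fun x hx => by simp only [oddSigns, if_neg hx]; split <;> simp)

lemma two_pow_le_ncard_thom (m d : ℕ) (hfin : {f | THom (m + m) d f}.Finite) :
    2 ^ m ≤ Set.ncard {f | THom (m + m) d f} := by
  calc 2 ^ m = (Set.range (oddSigns m)).ncard := by
        rw [Set.ncard_range_of_injective (oddSigns_injective m)]; simp
    _ ≤ _ := Set.ncard_le_ncard (Set.range_subset_iff.2 (thom_oddSigns m d)) hfin

lemma ncard_thom_range_lt_three_le_two {n : ℕ} (d : ℕ) (h1 : 1 < n) :
    Set.ncard {f : Fin n → ℤ | THom n d f ∧ (Set.range f).ncard < 3} ≤ 2 := by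
  have hsub : {f : Fin n → ℤ | THom n d f ∧ (Set.range f).ncard < 3} ⊆
      {alternating n 1, alternating n (-1)} := by
    rintro f ⟨hf, hrange⟩
    have hf1 := hf.abs_sub_succ 0 h1
    rw [hf.1 ⟨0, by omega⟩ rfl, sub_zero, abs_eq zero_le_one] at hf1
    rw [hf.eq_alternating h1 hrange]
    rcases hf1 with h | h <;> simp [h]
  calc _ ≤ ({alternating n 1, alternating n (-1)} : Set (Fin n → ℤ)).ncard :=
        Set.ncard_le_ncard hsub (Set.toFinite _)
    _ ≤ 2 := (Set.ncard_insert_le _ _).trans (by simp)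

theorem stmt9_general (n d : ℕ) (hn : 0 < n) (hne : Even n) :
    (Set.ncard {f : Fin n → ℤ | THom n d f ∧ (Set.range f).ncard < 3} : ℝ) /
      (Set.ncard {f : Fin n → ℤ | THom n d f} : ℝ) ≤ (2 : ℝ) ^ (1 - (n : ℝ) / 2) := by
  obtain ⟨m, rfl⟩ := hne
  have hbound : (2 : ℝ) ^ (1 - ((m + m : ℕ) : ℝ) / 2) = 2 / 2 ^ m := by
    rw [show 1 - ((m + m : ℕ) : ℝ) / 2 = 1 - m by push_cast; ring,
      Real.rpow_sub two_pos, Real.rpow_one, Real.rpow_natCast]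
  rw [hbound]
  rcases Nat.eq_zero_or_pos (Set.ncard {f | THom (m + m) d f}) with h0 | hpos
  · rw [h0, Nat.cast_zero, div_zero]
    positivity
  have hnum := ncard_thom_range_lt_three_le_two (n := m + m) d (by omega)
  have hden := two_pow_le_ncard_thom m d (Set.finite_of_ncard_pos hpos)
  exact div_le_div₀ zero_le_two (by exact_mod_cast hnum) (by positivity) (by exact_mod_cast hden)

/-- Let `n` be even and `f` uniformly distributed on `Hom(T_{n,d},0)`.
Then `Pr(|Rng f| < 3) ≤ 2^(1−n/2)`. -/
theorem stmt9 (n d : ℕ) (hn : 0 < n) (hne : Even n) (hd : 0 < d) :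
    (Set.ncard {f : Fin n → ℤ | THom n d f ∧ (Set.range f).ncard < 3} : ℝ) /
      (Set.ncard {f : Fin n → ℤ | THom n d f} : ℝ) ≤ (2 : ℝ) ^ (1 - (n : ℝ) / 2) :=
  stmt9_general n d hn hne
end

section
/- Fix d ≥ 1 and let λ = λ(d) be the unique positive solution of λ^{d−1/2}(λ−2) = 1. Then there exists a constant C(d) > 0 such that |Hom(P_{n,d},0)| = C(d)·λ^{n/2}·(1+o(1)) as n → ∞. -/
open Filter Topology Finset

/-!
A homomorphism is determined by its word of `±1` steps. Given unit steps, every odd window of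
length at most `2d+1` has increment `±1` iff any two repeats (equal consecutive steps, i.e.
`f (i+2) ≠ f i`) at odd distance are at least `2d+1` apart. Reading a word letter by letter,
with the distance to the last repeat as state, gives a transfer recursion whose counts
`N n = |Hom(P_{n,d},0)|` obey `N (n+2d+3) = 2 N (n+2d+1) + N (n+2)`. Dividing by `ν ^ n`, where
`ν = √λ` is the root of `x ^ (2d+1) = 2 x ^ (2d-1) + 1`, turns this into a convex combination of
the values at lags `2` and `2d+1`. These lags are coprime, so a deficit below the running maximum
spreads to a whole window within boundedly many steps, the oscillation over windows contracts
geometrically, and `N n / ν ^ n` converges to a positive limit.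
-/

/-- `f : {0,…,n} → ℤ` is a graph homomorphism from `P_{n,d}` to `ℤ` sending `0` to `0`:
`f 0 = 0` and `|f i − f j| = 1` whenever `|i − j| ∈ {1,3,…,2d+1}`. -/
def PHom (n d : ℕ) (f : Fin (n + 1) → ℤ) : Prop :=
  f 0 = 0 ∧ ∀ i j : Fin (n + 1),
    (∃ k, k ≤ d ∧ |((i : ℕ) : ℤ) - ((j : ℕ) : ℤ)| = 2 * k + 1) → |f i - f j| = 1

def IsLagAverage (p q : ℝ) (L : ℕ) (b : ℕ → ℝ) : Prop :=
  ∀ n, b (n + L + 2) = p * b (n + L) + q * b n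

namespace IsLagAverage

variable {p q : ℝ} {L : ℕ} {b : ℕ → ℝ}

theorem neg (h : IsLagAverage p q L b) : IsLagAverage p q L (-b) := fun n => by
  simp only [Pi.neg_apply, h n]
  ring

theorem le_of_forall_lt_le (h : IsLagAverage p q L b) (hp : 0 ≤ p) (hq : 0 ≤ q)
    (hpq : p + q = 1) {k : ℕ} {c : ℝ} (hc : ∀ i < L + 2, b (k + i) ≤ c) :
    ∀ n, k ≤ n → b n ≤ c := by
  intro n
  induction n using Nat.strong_induction_on with
  | _ n ih =>
    intro hkn
    by_cases hn : n < k + (L + 2)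
    · simpa [Nat.add_sub_cancel' hkn] using hc (n - k) (by omega)
    · obtain ⟨m, rfl⟩ : ∃ m, n = m + L + 2 := ⟨n - (L + 2), by omega⟩
      rw [h m]
      have h₁ := mul_le_mul_of_nonneg_left (ih (m + L) (by omega) (by omega)) hp
      have h₂ := mul_le_mul_of_nonneg_left (ih m (by omega) (by omega)) hq
      linear_combination h₁ + h₂ + c * hpq

theorem exists_forall_le (h : IsLagAverage p q L b) (hp : 0 ≤ p) (hq : 0 ≤ q)
    (hpq : p + q = 1) : ∃ i, ∀ n, b n ≤ b i := by
  obtain ⟨i, -, hi⟩ := (range (L + 2)).exists_max_image b ⟨0, by simp⟩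
  exact ⟨i, fun n => h.le_of_forall_lt_le hp hq hpq (k := 0)
    (fun j hj => by simpa using hi j (by simpa using hj)) n (Nat.zero_le n)⟩

theorem exists_forall_ge (h : IsLagAverage p q L b) (hp : 0 ≤ p) (hq : 0 ≤ q)
    (hpq : p + q = 1) : ∃ i, ∀ n, b i ≤ b n := by
  obtain ⟨i, hi⟩ := h.neg.exists_forall_le hp hq hpq
  exact ⟨i, fun n => by simpa using hi n⟩

theorem le_sub_pow_mul_of_forall_le (h : IsLagAverage p q L b) (hp : 0 ≤ p) (hq : 0 ≤ q)
    (hpq : p + q = 1) {k : ℕ} {c : ℝ} (hc : ∀ n, k ≤ n → b n ≤ c) (t : ℕ) :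
    b (k + L + 2 * t) ≤ c - p ^ t * (c - b (k + L)) := by
  induction t with
  | zero => simp
  | succ t ih =>
    have hrec := h (k + 2 * t)
    rw [show k + 2 * t + L + 2 = k + L + 2 * (t + 1) by ring,
      show k + 2 * t + L = k + L + 2 * t by ring] at hrec
    rw [hrec, pow_succ]
    have h₁ := mul_le_mul_of_nonneg_left ih hp
    have h₂ := mul_le_mul_of_nonneg_left (hc (k + 2 * t) (by omega)) hq
    linear_combination h₁ + h₂ + c * hpq

/-- A deficit below an upper bound `c` at `j = k + L` spreads along the two lags: by `p ^ t` to
`j + 2 t`, and then by `q` to `j + 2 t + L + 2`; since `L` is odd, this reaches every `j + e`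
with `e ≥ L + 2`. -/
theorem le_sub_mul_of_forall_le (h : IsLagAverage p q L b) (hp : 0 ≤ p) (hq : 0 ≤ q)
    (hpq : p + q = 1) (hL : Odd L) {k : ℕ} {c : ℝ} (hc : ∀ n, k ≤ n → b n ≤ c) {e : ℕ}
    (he : L + 2 ≤ e) : b (k + L + e) ≤ c - q * p ^ e * (c - b (k + L)) := by
  set G := c - b (k + L)
  have hG : 0 ≤ G := sub_nonneg.2 (hc _ (by omega))
  have even_lag := h.le_sub_pow_mul_of_forall_le hp hq hpq hc
  have odd_lag (t : ℕ) : b (k + L + (2 * t + L + 2)) ≤ c - q * p ^ t * G := by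
    have hrec := h (k + L + 2 * t)
    rw [show k + L + 2 * t + L + 2 = k + L + (2 * t + L + 2) by ring] at hrec
    rw [hrec]
    have h₁ := mul_le_mul_of_nonneg_left (hc (k + L + 2 * t + L) (by omega)) hp
    have h₂ := mul_le_mul_of_nonneg_left (even_lag t) hq
    linear_combination h₁ + h₂ + c * hpq
  have hp₁ : p ≤ 1 := by linarith
  have hq₁ : q ≤ 1 := by linarith
  obtain ⟨t, hte, hbt⟩ : ∃ t ≤ e, b (k + L + e) ≤ c - q * p ^ t * G := by
    obtain ⟨r, rfl⟩ := hL
    rcases Nat.even_or_odd' e with ⟨s, rfl | rfl⟩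
    · refine ⟨s, by omega, (even_lag s).trans (sub_le_sub_left ?_ c)⟩
      rw [mul_assoc]
      exact mul_le_of_le_one_left (by positivity) hq₁
    · have := odd_lag (s - r - 1)
      rw [show 2 * (s - r - 1) + (2 * r + 1) + 2 = 2 * s + 1 by omega] at this
      exact ⟨s - r - 1, by omega, this⟩
  refine hbt.trans (sub_le_sub_left ?_ c)
  exact mul_le_mul_of_nonneg_right
    (mul_le_mul_of_nonneg_left (pow_le_pow_of_le_one hp hp₁ hte) hq) hG

theorem forall_le_sub_mul_of_forall_le (h : IsLagAverage p q L b) (hp : 0 ≤ p) (hq : 0 ≤ q)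
    (hpq : p + q = 1) (hL : Odd L) {k : ℕ} {c : ℝ} (hc : ∀ n, k ≤ n → b n ≤ c) :
    ∀ n, k + (2 * L + 2) ≤ n → b n ≤ c - q * p ^ (2 * L + 3) * (c - b (k + L)) := by
  refine h.le_of_forall_lt_le hp hq hpq fun i hi => ?_
  have hbi := h.le_sub_mul_of_forall_le hp hq hpq hL hc (e := L + 2 + i) (by omega)
  rw [show k + L + (L + 2 + i) = k + (2 * L + 2) + i by ring] at hbi
  have hG : 0 ≤ c - b (k + L) := sub_nonneg.2 (hc _ (by omega))
  refine hbi.trans (sub_le_sub_left (mul_le_mul_of_nonneg_right ?_ hG) c)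
  exact mul_le_mul_of_nonneg_left (pow_le_pow_of_le_one hp (by linarith) (by omega)) hq

theorem exists_bounds_width_eq (h : IsLagAverage p q L b) (hp : 0 ≤ p) (hq : 0 ≤ q)
    (hpq : p + q = 1) (hL : Odd L) {k : ℕ} {m M : ℝ}
    (hb : ∀ n, k ≤ n → m ≤ b n ∧ b n ≤ M) :
    ∃ m' M', (∀ n, k + (2 * L + 2) ≤ n → m' ≤ b n ∧ b n ≤ M') ∧
      M' - m' = (1 - q * p ^ (2 * L + 3)) * (M - m) := by
  have hup := h.forall_le_sub_mul_of_forall_le hp hq hpq hL fun n hn => (hb n hn).2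
  have hlow := h.neg.forall_le_sub_mul_of_forall_le hp hq hpq hL (c := -m)
    fun n hn => by simpa using (hb n hn).1
  set δ := q * p ^ (2 * L + 3)
  refine ⟨m + δ * (b (k + L) - m), M - δ * (M - b (k + L)),
    fun n hn => ⟨?_, hup n hn⟩, by ring⟩
  have := hlow n hn
  simp only [Pi.neg_apply] at this
  linarith

theorem exists_bounds_width_le_pow (h : IsLagAverage p q L b) (hp : 0 ≤ p) (hq : 0 ≤ q)
    (hpq : p + q = 1) (hL : Odd L) {m M : ℝ} (hb : ∀ n, m ≤ b n ∧ b n ≤ M) (t : ℕ) :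
    ∃ m' M', (∀ n, t * (2 * L + 2) ≤ n → m' ≤ b n ∧ b n ≤ M') ∧
      M' - m' ≤ (1 - q * p ^ (2 * L + 3)) ^ t * (M - m) := by
  set ρ := 1 - q * p ^ (2 * L + 3)
  have hρ : 0 ≤ ρ := by
    have : p ^ (2 * L + 3) ≤ 1 := pow_le_one₀ hp (by linarith)
    nlinarith
  induction t with
  | zero => exact ⟨m, M, fun n _ => hb n, by simp⟩
  | succ t ih =>
    obtain ⟨m', M', hb', hw'⟩ := ih
    obtain ⟨m'', M'', hb'', hw''⟩ := h.exists_bounds_width_eq hp hq hpq hL hb'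
    refine ⟨m'', M'', fun n hn => hb'' n (by rwa [Nat.succ_mul] at hn), ?_⟩
    calc M'' - m'' = ρ * (M' - m') := hw''
      _ ≤ ρ * (ρ ^ t * (M - m)) := mul_le_mul_of_nonneg_left hw' hρ
      _ = ρ ^ (t + 1) * (M - m) := by ring

theorem cauchySeq (h : IsLagAverage p q L b) (hp : 0 < p) (hq : 0 < q) (hpq : p + q = 1)
    (hL : Odd L) : CauchySeq b := by
  have hρ₀ : 0 ≤ 1 - q * p ^ (2 * L + 3) := by
    have : p ^ (2 * L + 3) ≤ 1 := pow_le_one₀ hp.le (by linarith)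
    nlinarith
  have hρ₁ : 1 - q * p ^ (2 * L + 3) < 1 := by have := pow_pos hp (2 * L + 3); nlinarith
  obtain ⟨i₀, hi₀⟩ := h.exists_forall_ge hp.le hq.le hpq
  obtain ⟨i₁, hi₁⟩ := h.exists_forall_le hp.le hq.le hpq
  rw [Metric.cauchySeq_iff]
  intro ε hε
  obtain ⟨t, ht⟩ := (((tendsto_pow_atTop_nhds_zero_of_lt_one hρ₀ hρ₁).mul_const
    (b i₁ - b i₀)).eventually (gt_mem_nhds (by simpa using hε))).exists
  obtain ⟨m, M, hb, hw⟩ :=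
    h.exists_bounds_width_le_pow hp.le hq.le hpq hL (fun n => ⟨hi₀ n, hi₁ n⟩) t
  refine ⟨t * (2 * L + 2), fun n hn n' hn' => ?_⟩
  have := hb n hn
  have := hb n' hn'
  rw [Real.dist_eq, abs_lt]
  constructor <;> linarith

theorem exists_pos_tendsto (h : IsLagAverage p q L b) (hp : 0 < p) (hq : 0 < q)
    (hpq : p + q = 1) (hL : Odd L) (hb : ∀ n, 0 < b n) :
    ∃ C, 0 < C ∧ Tendsto b atTop (𝓝 C) := by
  obtain ⟨C, hC⟩ := cauchySeq_tendsto_of_complete (h.cauchySeq hp hq hpq hL)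
  obtain ⟨i₀, hi₀⟩ := h.exists_forall_ge hp.le hq.le hpq
  exact ⟨C, (hb i₀).trans_le (ge_of_tendsto' hC hi₀), hC⟩

end IsLagAverage

theorem exists_pos_tendsto_div_pow_of_recurrence {L : ℕ} (hL : Odd L) {a c ν : ℝ} (ha : 0 < a)
    (hc : 0 < c) (hν : 0 < ν) (hchar : ν ^ (L + 2) = a * ν ^ L + c) {N : ℕ → ℝ}
    (hN : ∀ n, 0 < N n) (hrec : ∀ n, N (n + L + 2) = a * N (n + L) + c * N n) :
    ∃ C, 0 < C ∧ Tendsto (fun n => N n / ν ^ n) atTop (𝓝 C) := by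
  have hpq : a / ν ^ 2 + c / ν ^ (L + 2) = 1 := by
    rw [show a / ν ^ 2 = a * ν ^ L / ν ^ (L + 2) by field_simp; ring, ← add_div, ← hchar,
      div_self (by positivity)]
  refine IsLagAverage.exists_pos_tendsto (fun n => ?_) (by positivity) (by positivity) hpq hL
    fun n => div_pos (hN n) (by positivity)
  simp only [hrec]
  field_simp
  ring

def stepOf : Bool → ℤ
  | true => 1
  | false => -1

def ofSteps (w : List Bool) (i : ℕ) : ℤ := ((w.take i).map stepOf).sum

@[simp] theorem ofSteps_zero (w : List Bool) : ofSteps w 0 = 0 := by simp [ofSteps]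

theorem ofSteps_cons_succ (b : Bool) (w : List Bool) (i : ℕ) :
    ofSteps (b :: w) (i + 1) = stepOf b + ofSteps w i := by
  simp [ofSteps]

theorem ofSteps_succ {w : List Bool} {i : ℕ} (hi : i < w.length) :
    ofSteps w (i + 1) = ofSteps w i + stepOf w[i] := by
  rw [ofSteps, ofSteps, List.take_add_one, List.map_append, List.sum_append,
    List.getElem?_eq_getElem hi]
  simp

theorem abs_ofSteps_succ_sub {w : List Bool} {i : ℕ} (hi : i < w.length) :
    |ofSteps w (i + 1) - ofSteps w i| = 1 := by
  rw [ofSteps_succ hi, add_sub_cancel_left]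
  cases w[i] <;> rfl

theorem stepOf_decide {x y : ℤ} (h : |y - x| = 1) : stepOf (decide (y = x + 1)) = y - x := by
  rcases abs_eq zero_le_one |>.1 h with h | h
  · rw [decide_eq_true (by omega), h]; rfl
  · rw [decide_eq_false (by omega), h]; rfl

def IsRepeat : List Bool → ℕ → Prop
  | a :: b :: _, 0 => a = b
  | _ :: w, i + 1 => IsRepeat w i
  | _, _ => False

theorem isRepeat_cons_succ (a : Bool) (w : List Bool) (i : ℕ) :
    IsRepeat (a :: w) (i + 1) ↔ IsRepeat w i := by rw [IsRepeat]

theorem isRepeat_cons_cons (a b : Bool) (w : List Bool) :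
    IsRepeat (a :: b :: w) 0 ↔ a = b := by rw [IsRepeat]

theorem isRepeat_iff (w : List Bool) (i : ℕ) :
    IsRepeat w i ↔ i + 2 ≤ w.length ∧ ofSteps w (i + 2) ≠ ofSteps w i := by
  induction w generalizing i with
  | nil => simp [IsRepeat]
  | cons a w ih =>
    cases i with
    | zero =>
      cases w with
      | nil => simp [IsRepeat]
      | cons b w => cases a <;> cases b <;> simp [IsRepeat, ofSteps, stepOf]
    | succ i =>
      simp only [isRepeat_cons_succ, ih, ofSteps_cons_succ, List.length_cons, ne_eq,
        add_right_inj]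
      omega

def RepeatsSpaced (d : ℕ) (w : List Bool) : Prop :=
  ∀ i t, IsRepeat w i → IsRepeat w (i + (2 * t + 1)) → d ≤ t

/-- The repeats of `w` are compatible with a further repeat `s` positions before position `0`
of `w`. -/
def SpacedFrom (d s : ℕ) (w : List Bool) : Prop :=
  ∀ j t, IsRepeat w j → j + s = 2 * t + 1 → d ≤ t

def Admissible (d s : ℕ) (w : List Bool) : Prop :=
  RepeatsSpaced d w ∧ SpacedFrom d s w

section Admissible

variable {d : ℕ}

theorem repeatsSpaced_cons (a : Bool) (w : List Bool) :
    RepeatsSpaced d (a :: w) ↔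
      (IsRepeat (a :: w) 0 → SpacedFrom d 1 w) ∧ RepeatsSpaced d w := by
  simp only [RepeatsSpaced, SpacedFrom]
  constructor
  · intro h
    refine ⟨fun h₀ j t hj hjt => h 0 t h₀ ?_, fun i t hi hit => h (i + 1) t ?_ ?_⟩
    · rwa [show 0 + (2 * t + 1) = j + 1 by omega, isRepeat_cons_succ]
    · rwa [isRepeat_cons_succ]
    · rwa [show i + 1 + (2 * t + 1) = i + (2 * t + 1) + 1 by ring, isRepeat_cons_succ]
  · rintro ⟨h₀, h⟩ (_ | i) t hi hit
    · rw [show 0 + (2 * t + 1) = 2 * t + 1 by ring, isRepeat_cons_succ] at hit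
      exact h₀ hi _ t hit rfl
    · rw [show i + 1 + (2 * t + 1) = i + (2 * t + 1) + 1 by ring, isRepeat_cons_succ] at hit
      exact h i t ((isRepeat_cons_succ a w i).1 hi) hit

theorem spacedFrom_cons (a : Bool) (w : List Bool) (s : ℕ) :
    SpacedFrom d s (a :: w) ↔
      (IsRepeat (a :: w) 0 → ∀ t, s = 2 * t + 1 → d ≤ t) ∧ SpacedFrom d (s + 1) w := by
  constructor
  · intro h
    exact ⟨fun h₀ t hst => h 0 t h₀ (by omega),
      fun j t hj hjt => h (j + 1) t ((isRepeat_cons_succ a w j).2 hj) (by omega)⟩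
  · rintro ⟨h₀, h⟩ (_ | j) t hj hjt
    · exact h₀ hj t (by omega)
    · exact h j t ((isRepeat_cons_succ a w j).1 hj) (by omega)

theorem spacedFrom_of_le {s : ℕ} (hs : 2 * d ≤ s) (w : List Bool) : SpacedFrom d s w :=
  fun _ _ _ _ => by omega

theorem SpacedFrom.add_two_mul {s : ℕ} {w : List Bool} (h : SpacedFrom d s w) (k : ℕ) :
    SpacedFrom d (s + 2 * k) w :=
  fun j t hj hjt => (h j (t - k) hj (by omega)).trans (Nat.sub_le t k)

theorem admissible_singleton (s : ℕ) (a : Bool) : Admissible d s [a] :=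
  ⟨fun i _ h => by cases i <;> simp [IsRepeat] at h,
    fun i _ h => by cases i <;> simp [IsRepeat] at h⟩

theorem admissible_iff_of_le {s : ℕ} (hs : 2 * d ≤ s) {w : List Bool} :
    Admissible d s w ↔ RepeatsSpaced d w :=
  and_iff_left (spacedFrom_of_le hs w)

theorem forall_eq_two_mul_add_one_imp_iff {s : ℕ} :
    (∀ t, s = 2 * t + 1 → d ≤ t) ↔ Even s ∨ 2 * d + 1 ≤ s := by
  constructor
  · intro h
    rcases Nat.even_or_odd' s with ⟨t, rfl | rfl⟩
    · exact Or.inl (even_two_mul t)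
    · exact Or.inr (by have := h t rfl; omega)
  · rintro (⟨k, rfl⟩ | h) t ht <;> omega

/-- Reading `w` after the letter `a` is an automaton whose state `s` is the distance to the last
repeat: a repeat is allowed after an even distance or a distance at least `2 d + 1`, and it
resets the distance to `1`. -/
theorem admissible_cons_cons (s : ℕ) (a b : Bool) (w : List Bool) :
    Admissible d s (a :: b :: w) ↔
      if b = a then (Even s ∨ 2 * d + 1 ≤ s) ∧ Admissible d 1 (b :: w)
      else Admissible d (s + 1) (b :: w) := by
  rw [Admissible, Admissible, Admissible, repeatsSpaced_cons a (b :: w),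
    spacedFrom_cons a (b :: w) s, isRepeat_cons_cons]
  split_ifs with hba
  · subst hba
    simp only [forall_const, forall_eq_two_mul_add_one_imp_iff]
    constructor
    · rintro ⟨⟨h₁, hr⟩, hs, -⟩
      exact ⟨hs, hr, h₁⟩
    · rintro ⟨hs, hr, h₁⟩
      refine ⟨⟨h₁, hr⟩, hs, ?_⟩
      rcases hs with ⟨k, rfl⟩ | hs
      · simpa [Nat.add_comm, two_mul] using h₁.add_two_mul k
      · exact spacedFrom_of_le (by omega) _
  · simp [Ne.symm hba]

end Admissible

def admissibleWords (d : ℕ) : ℕ → Bool → ℕ → Finset (List Bool)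
  | 0, _, _ => {[]}
  | m + 1, a, s =>
    (if Even s ∨ 2 * d + 1 ≤ s then (admissibleWords d m a 1).image (a :: ·) else ∅) ∪
      (admissibleWords d m (!a) (s + 1)).image ((!a) :: ·)

theorem mem_admissibleWords {d m : ℕ} {a : Bool} {s : ℕ} {w : List Bool} :
    w ∈ admissibleWords d m a s ↔ w.length = m ∧ Admissible d s (a :: w) := by
  induction m generalizing a s w with
  | zero =>
    simp only [admissibleWords, Finset.mem_singleton, List.length_eq_zero_iff, iff_self_and]
    rintro rfl
    exact admissible_singleton s a
  | succ m ih =>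
    cases w with
    | nil => rw [admissibleWords]; split_ifs <;> simp
    | cons b w =>
      have mem_image_cons (S : Finset (List Bool)) (c : Bool) :
          b :: w ∈ S.image (c :: ·) ↔ b = c ∧ w ∈ S := by simp [eq_comm, and_comm]
      rw [admissibleWords, Finset.mem_union, apply_ite (b :: w ∈ ·), mem_image_cons,
        mem_image_cons, ih, ih, admissible_cons_cons]
      cases a <;> cases b <;> simp [and_left_comm]

def admissibleCount (d : ℕ) : ℕ → ℕ → ℕ
  | 0, _ => 1
  | m + 1, s =>
    admissibleCount d m (s + 1) + if Even s ∨ 2 * d + 1 ≤ s then admissibleCount d m 1 else 0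

theorem card_admissibleWords (d m : ℕ) (a : Bool) (s : ℕ) :
    (admissibleWords d m a s).card = admissibleCount d m s := by
  induction m generalizing a s with
  | zero => rfl
  | succ m ih =>
    have hdisj (S T : Finset (List Bool)) :
        Disjoint (S.image (a :: ·)) (T.image ((!a) :: ·)) := by
      simp [Finset.disjoint_left]
    rw [admissibleWords, admissibleCount, card_union_of_disjoint (by split_ifs <;> simp [hdisj]),
      card_image_of_injective _ List.cons_injective, ih, add_comm]
    split_ifs <;> simp [card_image_of_injective _ List.cons_injective, ih]

def spacedWords (d m : ℕ) : Finset (List Bool) :=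
  (admissibleWords d m true (2 * d + 1)).image (true :: ·) ∪
    (admissibleWords d m false (2 * d + 1)).image (false :: ·)

theorem mem_spacedWords {d m : ℕ} {w : List Bool} :
    w ∈ spacedWords d m ↔ w.length = m + 1 ∧ RepeatsSpaced d w := by
  cases w with
  | nil => simp [spacedWords]
  | cons b w => cases b <;> simp [spacedWords, mem_admissibleWords, admissible_iff_of_le]

theorem card_spacedWords (d m : ℕ) :
    (spacedWords d m).card = 2 * admissibleCount d m (2 * d + 1) := by
  rw [spacedWords, card_union_of_disjoint (by simp [Finset.disjoint_left]),
    card_image_of_injective _ List.cons_injective, card_image_of_injective _ List.cons_injective,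
    card_admissibleWords, card_admissibleWords]
  ring

theorem sum_range_two_mul_eq_add {M : Type*} [AddCommMonoid M] (u : ℕ → M) (m d : ℕ) :
    ∑ i ∈ range (2 * d), u (m + i) =
      ∑ i ∈ range d, u (m + 2 * i) + ∑ i ∈ range d, u (m + 1 + 2 * i) := by
  induction d with
  | zero => simp
  | succ d ih =>
    rw [show 2 * (d + 1) = 2 * d + 1 + 1 by ring, sum_range_succ, sum_range_succ, ih,
      sum_range_succ, sum_range_succ, show m + 1 + 2 * d = m + (2 * d + 1) by ring]
    abel

section admissibleCount

variable (d : ℕ)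

theorem admissibleCount_pos (m s : ℕ) : 0 < admissibleCount d m s := by
  induction m generalizing s with
  | zero => simp [admissibleCount]
  | succ m ih => exact Nat.add_pos_left (ih _) _

theorem admissibleCount_of_le (m : ℕ) {s : ℕ} (hs : 2 * d + 1 ≤ s) :
    admissibleCount d m s = admissibleCount d m (2 * d + 1) := by
  induction m generalizing s with
  | zero => rfl
  | succ m ih =>
    simp only [admissibleCount, if_pos (Or.inr hs), if_pos (Or.inr le_rfl),
      ih (by omega : 2 * d + 1 ≤ s + 1), ih (by omega : 2 * d + 1 ≤ 2 * d + 1 + 1)]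

theorem admissibleCount_succ_top (m : ℕ) :
    admissibleCount d (m + 1) (2 * d + 1) =
      admissibleCount d m (2 * d + 1) + admissibleCount d m 1 := by
  rw [admissibleCount, if_pos (Or.inr le_rfl), admissibleCount_of_le d m (by omega)]

theorem admissibleCount_add_top (m t : ℕ) :
    admissibleCount d (m + t) (2 * d + 1) =
      admissibleCount d m (2 * d + 1) + ∑ i ∈ range t, admissibleCount d (m + i) 1 := by
  induction t with
  | zero => simp
  | succ t ih => rw [← add_assoc, admissibleCount_succ_top, ih, sum_range_succ, add_assoc]

/-- From an odd state below `2 d + 1` the next letter must differ, and from the following even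
state a repeat is allowed, so every two letters either reset the state to `1` or advance it by
two. -/
theorem admissibleCount_add_two_mul (m : ℕ) {j : ℕ} (hj : j ≤ d) :
    admissibleCount d (m + 2 * j) (2 * (d - j) + 1) =
      admissibleCount d m (2 * d + 1) + ∑ i ∈ range j, admissibleCount d (m + 2 * i) 1 := by
  induction j with
  | zero => simp
  | succ j ih =>
    have hodd : ¬ (Even (2 * (d - (j + 1)) + 1) ∨ 2 * d + 1 ≤ 2 * (d - (j + 1)) + 1) := by
      rw [Nat.even_iff]; omega
    have heven : Even (2 * (d - (j + 1)) + 1 + 1) := by rw [Nat.even_iff]; omega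
    rw [show m + 2 * (j + 1) = m + 2 * j + 1 + 1 by ring, admissibleCount, if_neg hodd,
      admissibleCount, if_pos (Or.inl heven),
      show 2 * (d - (j + 1)) + 1 + 1 + 1 = 2 * (d - j) + 1 by omega, ih (by omega),
      sum_range_succ, add_zero, add_assoc]

theorem admissibleCount_rec (m : ℕ) :
    admissibleCount d (m + 2 * d + 2) (2 * d + 1) =
      2 * admissibleCount d (m + 2 * d) (2 * d + 1) + admissibleCount d (m + 1) (2 * d + 1) := by
  have h₀ := admissibleCount_add_two_mul d m le_rfl
  have h₁ := admissibleCount_add_two_mul d (m + 1) le_rfl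
  rw [Nat.sub_self, mul_zero, zero_add] at h₀ h₁
  rw [show m + 1 + 2 * d = m + 2 * d + 1 by ring] at h₁
  rw [admissibleCount_succ_top, admissibleCount_succ_top, h₀, h₁,
    admissibleCount_add_top d m (2 * d), sum_range_two_mul_eq_add (admissibleCount d · 1)]
  ring

end admissibleCount

def OddWindows (d n : ℕ) (g : ℕ → ℤ) : Prop :=
  ∀ a k, k ≤ d → a + (2 * k + 1) ≤ n → |g (a + (2 * k + 1)) - g a| = 1

def GapsSpaced (d n : ℕ) (g : ℕ → ℤ) : Prop :=
  ∀ i t, i + (2 * t + 1) + 2 ≤ n → g (i + 2) ≠ g i →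
    g (i + (2 * t + 1) + 2) ≠ g (i + (2 * t + 1)) → d ≤ t

theorem eq_of_abs_sub_eq_one {x y z w : ℤ} (hxz : x ≠ z) (hyx : |y - x| = 1)
    (hyz : |y - z| = 1) (hwx : |w - x| = 1) (hwz : |w - z| = 1) : y = w := by
  rw [abs_eq zero_le_one] at hyx hyz hwx hwz
  omega

section Windows

variable {d n : ℕ} {g : ℕ → ℤ}

theorem OddWindows.gapsSpaced (hw : OddWindows d n g) : GapsSpaced d n g := by
  intro i t hn hi hj
  by_contra! ht
  set j := i + (2 * t + 1)
  have h₁ : |g j - g i| = 1 := hw i t ht.le (by omega)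
  have h₂ : |g (j + 2) - g i| = 1 := by
    have := hw i (t + 1) ht (by omega)
    rwa [show i + (2 * (t + 1) + 1) = j + 2 by omega] at this
  have h₃ : |g j - g (i + 2)| = 1 := by
    rcases t with _ | t
    · have := hw (i + 1) 0 (Nat.zero_le d) (by omega)
      rwa [abs_sub_comm, show j = i + 1 by omega]
    · have := hw (i + 2) t (by omega) (by omega)
      rwa [show i + 2 + (2 * t + 1) = j by omega] at this
  have h₄ : |g (j + 2) - g (i + 2)| = 1 := by
    have := hw (i + 2) t ht.le (by omega)
    rwa [show i + 2 + (2 * t + 1) = j + 2 by omega] at this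
  -- `g j` and `g (j + 2)` both lie at distance `1` from `g i ≠ g (i + 2)`, so they coincide
  exact hj (eq_of_abs_sub_eq_one (Ne.symm hi) h₂ h₄ h₁ h₃)

theorem OddWindows.of_gapsSpaced (hs : OddWindows 0 n g) (hg : GapsSpaced d n g) :
    OddWindows d n g := by
  intro a k
  induction k generalizing a with
  | zero => exact fun _ ha => hs a 0 le_rfl ha
  | succ k ih =>
    intro hk ha
    by_cases hi : g (a + 2) = g a
    · have := ih (a + 2) (by omega) (by omega)
      rwa [show a + 2 + (2 * k + 1) = a + (2 * (k + 1) + 1) by ring, hi] at this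
    by_cases hj : g (a + (2 * k + 1) + 2) = g (a + (2 * k + 1))
    · have := ih a (by omega) (by omega)
      rwa [show a + (2 * (k + 1) + 1) = a + (2 * k + 1) + 2 by ring, hj]
    · exact absurd (hg a k (by omega) hi hj) (by omega)

theorem oddWindows_iff : OddWindows d n g ↔ OddWindows 0 n g ∧ GapsSpaced d n g :=
  ⟨fun h => ⟨fun a k hk => h a k (by omega), h.gapsSpaced⟩, fun h => h.1.of_gapsSpaced h.2⟩

theorem phom_iff_oddWindows (g : ℕ → ℤ) :
    PHom n d (fun a => g a) ↔ g 0 = 0 ∧ OddWindows d n g := by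
  refine and_congr Iff.rfl ⟨fun h a k hk ha => ?_, fun h i j ⟨k, hk, hij⟩ => ?_⟩
  · refine h ⟨a + (2 * k + 1), by omega⟩ ⟨a, by omega⟩ ⟨k, hk, ?_⟩
    push_cast
    rw [add_sub_cancel_left, abs_of_nonneg (by positivity)]
  · rcases abs_eq (by positivity) |>.1 hij with hij | hij
    · have := h j k hk (by omega)
      rwa [show (j : ℕ) + (2 * k + 1) = i by omega] at this
    · have := h i k hk (by omega)
      rwa [abs_sub_comm, show (i : ℕ) + (2 * k + 1) = j by omega] at this

end Windows

theorem gapsSpaced_ofSteps_iff {d : ℕ} (w : List Bool) :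
    GapsSpaced d w.length (ofSteps w) ↔ RepeatsSpaced d w := by
  simp only [GapsSpaced, RepeatsSpaced, isRepeat_iff]
  constructor
  · exact fun h i t hi hj => h i t hj.1 hi.2 hj.2
  · exact fun h i t hn hi hj => h i t ⟨by omega, hi⟩ ⟨hn, hj⟩

theorem phom_ofSteps_iff {d n : ℕ} {w : List Bool} (hw : w.length = n) :
    PHom n d (fun a => ofSteps w a) ↔ RepeatsSpaced d w := by
  subst hw
  rw [phom_iff_oddWindows, oddWindows_iff, gapsSpaced_ofSteps_iff]
  simp only [ofSteps_zero, true_and, and_iff_right_iff_imp]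
  intro _ a k hk ha
  obtain rfl : k = 0 := by omega
  exact abs_ofSteps_succ_sub (by omega)

def toWord {n : ℕ} (f : Fin (n + 1) → ℤ) : List Bool :=
  List.ofFn fun i : Fin n => decide (f i.succ = f i.castSucc + 1)

theorem toWord_ofSteps {n : ℕ} {w : List Bool} (hw : w.length = n) :
    toWord (fun a : Fin (n + 1) => ofSteps w a) = w := by
  subst hw
  refine List.ext_getElem (by simp [toWord]) fun i _ hi => ?_
  simp only [toWord, List.getElem_ofFn, Fin.val_succ, Fin.val_castSucc, ofSteps_succ hi]
  cases w[i] <;> simp [stepOf]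

theorem ofSteps_toWord {n : ℕ} {f : Fin (n + 1) → ℤ} (h₀ : f 0 = 0)
    (hs : ∀ i : Fin n, |f i.succ - f i.castSucc| = 1) (a : Fin (n + 1)) :
    ofSteps (toWord f) a = f a := by
  induction a using Fin.induction with
  | zero => simp [h₀]
  | succ i ih =>
    have hi : (i : ℕ) < (toWord f).length := by simp [toWord]
    rw [Fin.val_castSucc] at ih
    rw [Fin.val_succ, ofSteps_succ hi, ih]
    simp only [toWord, List.getElem_ofFn]
    rw [stepOf_decide (hs i), add_sub_cancel]

theorem ncard_phom_eq_card {d n : ℕ} (S : Finset (List Bool))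
    (hS : ∀ w, w ∈ S ↔ w.length = n ∧ RepeatsSpaced d w) :
    {f | PHom n d f}.ncard = S.card := by
  have himage : {f | PHom n d f} = (fun w (a : Fin (n + 1)) => ofSteps w a) '' S := by
    ext f
    constructor
    · intro hf
      have hsteps (i : Fin n) : |f i.succ - f i.castSucc| = 1 :=
        hf.2 _ _ ⟨0, Nat.zero_le d, by simp⟩
      have hfw : (fun a : Fin (n + 1) => ofSteps (toWord f) a) = f :=
        funext (ofSteps_toWord hf.1 hsteps)
      have hlen : (toWord f).length = n := by simp [toWord]
      exact ⟨toWord f, (hS _).2 ⟨hlen, (phom_ofSteps_iff hlen).1 (by rwa [hfw])⟩, hfw⟩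
    · rintro ⟨w, hw, rfl⟩
      exact (phom_ofSteps_iff ((hS w).1 hw).1).2 ((hS w).1 hw).2
  rw [himage, Set.InjOn.ncard_image, Set.ncard_coe_finset]
  intro w hw w' hw' hww'
  rw [← toWord_ofSteps ((hS w).1 hw).1, ← toWord_ofSteps ((hS w').1 hw').1]
  exact congrArg toWord hww'

noncomputable def homCount (n d : ℕ) : ℕ := {f : Fin (n + 1) → ℤ | PHom n d f}.ncard

theorem homCount_succ (m d : ℕ) :
    homCount (m + 1) d = 2 * admissibleCount d m (2 * d + 1) := by
  rw [homCount, ncard_phom_eq_card _ fun _ => mem_spacedWords, card_spacedWords]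

theorem homCount_succ_pos (m d : ℕ) : 0 < homCount (m + 1) d := by
  rw [homCount_succ]
  exact Nat.mul_pos two_pos (admissibleCount_pos d m _)

theorem homCount_add_three (m d : ℕ) :
    homCount (m + 2 * d + 3) d = 2 * homCount (m + 2 * d + 1) d + homCount (m + 2) d := by
  rw [homCount_succ, homCount_succ, homCount_succ, admissibleCount_rec]
  ring

theorem rpow_div_two_eq_sqrt_pow {l : ℝ} (hl : 0 ≤ l) (k : ℕ) : l ^ ((k : ℝ) / 2) = √l ^ k := by
  rw [Real.sqrt_eq_rpow, ← Real.rpow_natCast, ← Real.rpow_mul hl]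
  ring_nf

/-- Fix `d ≥ 1` and let `λ = λ(d)` be the unique positive solution of
`λ^(d−1/2)(λ−2) = 1`. Then there is a constant `C(d) > 0` such that
`|Hom(P_{n,d},0)| = C(d)·λ^(n/2)·(1+o(1))` as `n → ∞`. -/
theorem stmt14 (d : ℕ) (hd : 1 ≤ d) (l : ℝ) (hl : 0 < l)
    (hleq : l ^ ((d : ℝ) - 1 / 2) * (l - 2) = 1) :
    ∃ C : ℝ, 0 < C ∧
      Tendsto (fun n : ℕ =>
          (Set.ncard {f : Fin (n + 1) → ℤ | PHom n d f} : ℝ) / l ^ ((n : ℝ) / 2))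
        atTop (nhds C) := by
  have hν : 0 < √l := Real.sqrt_pos.2 hl
  have hchar : √l ^ (2 * d - 1 + 2) = 2 * √l ^ (2 * d - 1) + 1 := by
    have hexp : (d : ℝ) - 1 / 2 = ((2 * d - 1 : ℕ) : ℝ) / 2 := by
      push_cast [Nat.cast_sub (by omega : 1 ≤ 2 * d)]
      ring
    rw [hexp, rpow_div_two_eq_sqrt_pow hl.le] at hleq
    rw [pow_add, Real.sq_sqrt hl.le]
    linear_combination hleq
  obtain ⟨C, hC, hlim⟩ := exists_pos_tendsto_div_pow_of_recurrence (L := 2 * d - 1)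
    ⟨d - 1, by omega⟩ two_pos one_pos hν hchar (N := fun n => (homCount (n + 2) d : ℝ))
    (fun n => Nat.cast_pos.2 (homCount_succ_pos (n + 1) d)) fun n => by
      have := homCount_add_three n d
      rw [show n + 2 * d + 3 = n + (2 * d - 1) + 2 + 2 by omega,
        show n + 2 * d + 1 = n + (2 * d - 1) + 2 by omega] at this
      simp only [this]
      push_cast
      ring
  refine ⟨C / √l ^ 2, by positivity, ?_⟩
  rw [← tendsto_add_atTop_iff_nat 2]
  refine (hlim.div_const (√l ^ 2)).congr fun n => ?_
  rw [rpow_div_two_eq_sqrt_pow hl.le, pow_add, div_div]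
  rfl
end
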